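/- If e ∈ Win_a((p,Q)_d) in the weak spectroscopy energy game G△, then there exists a conjunction ⋀Ψ ∈ Strat((p,Q)_d, e) with expr^ε(⋀Ψ) ≤ e. -/

import Mathlib

/-! By induction on the derivation of `e ∈ Win_a(g)`, at every position `g` one builds an
attacker strategy formula for budget `e` whose price is at most `e`. Each move is charged
exactly what the matching formula constructor adds to the price: a `-ê_k` update pays for an
`ê_k` summand, and the `min_{1,6}` / `min_{1,7}` updates of the conjunct moves bound the copies
of the observation count that `expr^∧` places in components 6 and 7. -/

open Classical

noncomputable section

namespace Spectroscopy

/-! ### Energies and declining energy games -/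

/-- Energies: 8-dimensional vectors over `ℕ ∪ {∞}`, ordered componentwise. -/
abbrev Energy : Type := Fin 8 → ℕ∞

/-- The `i`-th unit vector. -/
def unitE (i : Fin 8) : Energy := fun k => if k = i then 1 else 0

/-- The vector with value `v` at position `i` and `0` elsewhere. -/
def onlyAt (i : Fin 8) (v : ℕ∞) : Energy := fun k => if k = i then v else 0

/-- Components of energy updates: `-1`, `0`, or minimum selection `min_D`.
For the component at position `k`, `minWith D` selects the minimum over the
positions `{k} ∪ D`, so the requirement `k ∈ D` of the paper holds by
construction. -/
inductive UpdComp : Type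
  | decr : UpdComp
  | zero : UpdComp
  | minWith (D : Finset (Fin 8)) : UpdComp
deriving DecidableEq

/-- Energy updates. -/
abbrev Update : Type := Fin 8 → UpdComp

/-- Partial application of an update to an energy (`none` when a component
would become negative). -/
def upd (e : Energy) (u : Update) : Option Energy :=
  if ∀ k, u k = UpdComp.decr → e k ≠ 0 then
    some (fun k =>
      match u k with
      | UpdComp.decr => e k - 1
      | UpdComp.zero => e k
      | UpdComp.minWith D => (insert k D).inf e)
  else none

/-- A declining energy game: positions, a defender predicate (attacker
positions are the non-defender ones), and moves labeled with updates. -/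
structure EGame (Pos : Type) where
  defender : Pos → Prop
  move : Pos → Update → Pos → Prop

/-- Attacker winning budgets `Win_a`: at an attacker position some move must
lead to an attacker-won position under the updated energy; at a defender
position every move must (be defined and) lead to an attacker-won position. -/
inductive EGame.Win {Pos : Type} (G : EGame Pos) : Pos → Energy → Prop
  | attack {g : Pos} {u : Update} {g' : Pos} {e e' : Energy} :
      ¬ G.defender g → G.move g u g' → upd e u = some e' → G.Win g' e' →
      G.Win g e
  | defend {g : Pos} {e : Energy} :
      G.defender g →
      (∀ u g', G.move g u g' → upd e u ≠ none) →
      (∀ u g' e', G.move g u g' → upd e u = some e' → G.Win g' e') →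
      G.Win g e

/-! ### Labeled transition systems with silent steps -/

section LTS

variable {Proc Act : Type}

/-- Weak internal steps `↠`: reflexive-transitive closure of `τ`-steps. -/
def Star (Tr : Proc → Act → Proc → Prop) (τ : Act) : Proc → Proc → Prop :=
  Relation.ReflTransGen fun p p' => Tr p τ p'

/-- A process is stable if it has no `τ`-step. -/
def Stable (Tr : Proc → Act → Proc → Prop) (τ : Act) (p : Proc) : Prop :=
  ∀ p', ¬ Tr p τ p'

/-- Optional step `p →(α) p'`: a real `α`-step, or `α = τ` and `p = p'`. -/
def OptStep (Tr : Proc → Act → Proc → Prop) (τ : Act) (p : Proc) (α : Act) (p' : Proc) : Prop :=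
  Tr p α p' ∨ (α = τ ∧ p = p')

/-- Lift of `→a` to sets. -/
def SetStep (Tr : Proc → Act → Proc → Prop) (Q : Set Proc) (a : Act) (Q' : Set Proc) : Prop :=
  Q' = {q' | ∃ q ∈ Q, Tr q a q'}

/-- Lift of `↠` to sets. -/
def SetStar (Tr : Proc → Act → Proc → Prop) (τ : Act) (Q Q' : Set Proc) : Prop :=
  Q' = {q' | ∃ q ∈ Q, Star Tr τ q q'}

/-- Lift of `→(α)` to sets. -/
def SetOpt (Tr : Proc → Act → Proc → Prop) (τ : Act) (Q : Set Proc) (α : Act)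
    (Q' : Set Proc) : Prop :=
  Q' = {q' | ∃ q ∈ Q, OptStep Tr τ q α q'}

end LTS

/-! ### The logic HML_srbb -/

mutual
/-- Formulas `φ` of HML_srbb: `⟨ε⟩χ` or immediate conjunctions `⋀Ψ`
(conjunctions are indexed by an arbitrary type). `⊤` is the empty conjunction. -/
inductive Formula (Act : Type) (τ : Act) : Type 1
  | delayed : DFormula Act τ → Formula Act τ
  | conj : (I : Type) → (I → Conjunct Act τ) → Formula Act τ

/-- Delayed formulas `χ`: observations `⟨a⟩φ` (with `a ≠ τ`), standard
conjunctions `⋀Ψ`, stable conjunctions `⋀({¬⟨τ⟩⊤} ∪ Ψ)`, and branching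
conjunctions `⋀({(α)φ} ∪ Ψ)`. -/
inductive DFormula (Act : Type) (τ : Act) : Type 1
  | obs : (a : Act) → a ≠ τ → Formula Act τ → DFormula Act τ
  | conj : (I : Type) → (I → Conjunct Act τ) → DFormula Act τ
  | stableConj : (I : Type) → (I → Conjunct Act τ) → DFormula Act τ
  | branchConj : (α : Act) → Formula Act τ → (I : Type) → (I → Conjunct Act τ) → DFormula Act τ

/-- Conjuncts `ψ`: positive `⟨ε⟩χ` or negative `¬⟨ε⟩χ`. -/
inductive Conjunct (Act : Type) (τ : Act) : Type 1
  | pos : DFormula Act τ → Conjunct Act τ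
  | neg : DFormula Act τ → Conjunct Act τ
end

section Semantics

variable {Proc Act : Type}

mutual
/-- Semantics `⟦φ⟧`. -/
def Sat (Tr : Proc → Act → Proc → Prop) (τ : Act) (p : Proc) : Formula Act τ → Prop
  | .delayed χ => ∃ p', Star Tr τ p p' ∧ SatD Tr τ p' χ
  | .conj _ ps => ∀ i, SatC Tr τ p (ps i)

/-- Semantics `⟦χ⟧^ε` of delayed formulas. -/
def SatD (Tr : Proc → Act → Proc → Prop) (τ : Act) (p : Proc) : DFormula Act τ → Prop
  | .obs a _ φ => ∃ p', Tr p a p' ∧ Sat Tr τ p' φ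
  | .conj _ ps => ∀ i, SatC Tr τ p (ps i)
  | .stableConj _ ps => Stable Tr τ p ∧ ∀ i, SatC Tr τ p (ps i)
  | .branchConj α φ _ ps =>
      (∃ p', OptStep Tr τ p α p' ∧ Sat Tr τ p' φ) ∧ ∀ i, SatC Tr τ p (ps i)

/-- Semantics `⟦ψ⟧^∧` of conjuncts. -/
def SatC (Tr : Proc → Act → Proc → Prop) (τ : Act) (p : Proc) : Conjunct Act τ → Prop
  | .pos χ => ∃ p', Star Tr τ p p' ∧ SatD Tr τ p' χ
  | .neg χ => ¬ ∃ p', Star Tr τ p p' ∧ SatD Tr τ p' χ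
end

/-- `φ` distinguishes `p` from the set `Q`. -/
def Distinguishes (Tr : Proc → Act → Proc → Prop) (τ : Act) (φ : Formula Act τ)
    (p : Proc) (Q : Set Proc) : Prop :=
  Sat Tr τ p φ ∧ ∀ q ∈ Q, ¬ Sat Tr τ q φ

/-- The delayed formula `χ` distinguishes `p` from the set `Q` w.r.t. `⟦·⟧^ε`. -/
def DistinguishesD (Tr : Proc → Act → Proc → Prop) (τ : Act) (χ : DFormula Act τ)
    (p : Proc) (Q : Set Proc) : Prop :=
  SatD Tr τ p χ ∧ ∀ q ∈ Q, ¬ SatD Tr τ q χ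

/-- The conjunct `ψ` distinguishes `p` from `q` w.r.t. `⟦·⟧^∧`. -/
def DistinguishesC (Tr : Proc → Act → Proc → Prop) (τ : Act) (ψ : Conjunct Act τ)
    (p q : Proc) : Prop :=
  SatC Tr τ p ψ ∧ ¬ SatC Tr τ q ψ

/-- Stability-respecting branching bisimulations: symmetric relations with the
branching-bisimulation transfer property and the stability-respecting
property. -/
def IsSRBBisim (Tr : Proc → Act → Proc → Prop) (τ : Act) (R : Proc → Proc → Prop) : Prop :=
  Symmetric R ∧
  (∀ p q, R p q → ∀ α p', Tr p α p' →
    (α = τ ∧ R p' q) ∨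
      ∃ q' q'', Star Tr τ q q' ∧ Tr q' α q'' ∧ R p q' ∧ R p' q'') ∧
  (∀ p q, R p q → Stable Tr τ p →
    ∃ q', Star Tr τ q q' ∧ Stable Tr τ q' ∧ R p q')

end Semantics

/-! ### Expressiveness prices -/

section Expr

variable {Act : Type} {τ : Act}

mutual
/-- Expressiveness price `expr` of formulas. -/
def exprF : Formula Act τ → Energy
  | .delayed χ => exprE χ
  | .conj I ps => ⨆ _ : Nonempty I, ((unitE 4 + unitE 2) + ⨆ i, exprC (ps i))

/-- Expressiveness price `expr^ε` of delayed formulas. -/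
def exprE : DFormula Act τ → Energy
  | .obs _ _ φ => unitE 0 + exprF φ
  | .conj I ps => ⨆ _ : Nonempty I, (unitE 2 + ⨆ i, exprC (ps i))
  | .stableConj _ ps => unitE 3 + ⨆ i, exprC (ps i)
  | .branchConj _ φ _ ps =>
      (unitE 1 + unitE 2) +
        (((unitE 0 + exprF φ) ⊔ onlyAt 5 (1 + exprF φ 0)) ⊔ ⨆ i, exprC (ps i))

/-- Expressiveness price `expr^∧` of conjuncts. -/
def exprC : Conjunct Act τ → Energy
  | .pos χ => exprE χ ⊔ onlyAt 5 (exprE χ 0)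
  | .neg χ => (unitE 7 + exprE χ) ⊔ onlyAt 6 (exprE χ 0)
end

end Expr

/-! ### The weak spectroscopy energy game -/

/-- Positions of the weak spectroscopy game. -/
inductive GPos (Proc Act : Type) : Type
  | att (p : Proc) (Q : Set Proc)                                 -- `[p,Q]_a`
  | attD (p : Proc) (Q : Set Proc)                                -- `[p,Q]^ε_a`
  | attC (p q : Proc)                                             -- `[p,q]^∧_a`
  | attB (p : Proc) (Q : Set Proc)                                -- `[p,Q]^η_a`
  | defC (p : Proc) (Q : Set Proc)                                -- `(p,Q)_d`
  | defS (p : Proc) (Q : Set Proc)                                -- `(p,Q)^s_d`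
  | defB (p : Proc) (α : Act) (p' : Proc) (Q Qa : Set Proc)       -- `(p,α,p',Q,Qa)^η_d`

/-- The zero update. -/
def zeroU : Update := fun _ => UpdComp.zero

/-- The update `-ê_i`. -/
def decU (i : Fin 8) : Update := fun k => if k = i then UpdComp.decr else UpdComp.zero

/-- The update `(min_{1,6},0,0,0,0,0,0,0)`. -/
def minU16 : Update := fun k => if k = 0 then UpdComp.minWith {5} else UpdComp.zero

/-- The update `(min_{1,7},0,0,0,0,0,0,-1)`. -/
def minU17dec8 : Update := fun k =>
  if k = 0 then UpdComp.minWith {6} else if k = 7 then UpdComp.decr else UpdComp.zero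

/-- The update `(0,-1,-1,0,0,0,0,0)`. -/
def dec23 : Update := fun k => if k = 1 ∨ k = 2 then UpdComp.decr else UpdComp.zero

/-- The update `(min_{1,6},-1,-1,0,0,0,0,0)`. -/
def minU16dec23 : Update := fun k =>
  if k = 0 then UpdComp.minWith {5}
  else if k = 1 ∨ k = 2 then UpdComp.decr else UpdComp.zero

section Game

variable {Proc Act : Type}

/-- Moves of the weak spectroscopy game. -/
inductive GMove (Tr : Proc → Act → Proc → Prop) (τ : Act) :
    GPos Proc Act → Update → GPos Proc Act → Prop
  | delay {p : Proc} {Q Q' : Set Proc} :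
      SetStar Tr τ Q Q' →
      GMove Tr τ (.att p Q) zeroU (.attD p Q')
  | procrastination {p p' : Proc} {Q : Set Proc} :
      Tr p τ p' → p ≠ p' →
      GMove Tr τ (.attD p Q) zeroU (.attD p' Q)
  | observation {p p' : Proc} {a : Act} {Q Q' : Set Proc} :
      Tr p a p' → a ≠ τ → SetStep Tr Q a Q' →
      GMove Tr τ (.attD p Q) (decU 0) (.att p' Q')
  | finishing {p : Proc} :
      GMove Tr τ (.att p ∅) zeroU (.defC p ∅)
  | immediateConj {p : Proc} {Q : Set Proc} :
      Q ≠ ∅ →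
      GMove Tr τ (.att p Q) (decU 4) (.defC p Q)
  | lateConj {p : Proc} {Q : Set Proc} :
      GMove Tr τ (.attD p Q) zeroU (.defC p Q)
  | conjAnswer {p q : Proc} {Q : Set Proc} :
      q ∈ Q →
      GMove Tr τ (.defC p Q) (decU 2) (.attC p q)
  | posConjunct {p q : Proc} {Q : Set Proc} :
      SetStar Tr τ {q} Q →
      GMove Tr τ (.attC p q) minU16 (.attD p Q)
  | negConjunct {p q : Proc} {Q : Set Proc} :
      SetStar Tr τ {p} Q → p ≠ q →
      GMove Tr τ (.attC p q) minU17dec8 (.attD q Q)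
  | stableConj {p : Proc} {Q : Set Proc} :
      Stable Tr τ p →
      GMove Tr τ (.attD p Q) zeroU (.defS p {q ∈ Q | Stable Tr τ q})
  | conjStableAnswer {p q : Proc} {Q : Set Proc} :
      q ∈ Q →
      GMove Tr τ (.defS p Q) (decU 3) (.attC p q)
  | stableFinishing {p : Proc} :
      GMove Tr τ (.defS p ∅) (decU 3) (.defC p ∅)
  | branchConj {p p' : Proc} {α : Act} {Q Qa : Set Proc} :
      OptStep Tr τ p α p' → Qa ⊆ Q →
      GMove Tr τ (.attD p Q) zeroU (.defB p α p' (Q \ Qa) Qa)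
  | branchAnswer {p p' q : Proc} {α : Act} {Q Qa : Set Proc} :
      q ∈ Q →
      GMove Tr τ (.defB p α p' Q Qa) dec23 (.attC p q)
  | branchObservation {p p' : Proc} {α : Act} {Q Qa Q' : Set Proc} :
      SetOpt Tr τ Qa α Q' →
      GMove Tr τ (.defB p α p' Q Qa) minU16dec23 (.attB p' Q')
  | branchAccounting {p : Proc} {Q : Set Proc} :
      GMove Tr τ (.attB p Q) (decU 0) (.att p Q)

/-- Defender positions of the weak spectroscopy game. -/
def isDefender : GPos Proc Act → Prop
  | .defC _ _ => True
  | .defS _ _ => True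
  | .defB _ _ _ _ _ => True
  | _ => False

/-- The weak spectroscopy energy game `G△`. -/
def specGame (Tr : Proc → Act → Proc → Prop) (τ : Act) : EGame (GPos Proc Act) where
  defender := isDefender
  move := GMove Tr τ

end Game

/-! ### Strategy formulas -/

section Strat

variable {Proc Act : Type}

mutual
/-- Attacker strategy formulas (formula sort). -/
inductive StratF (Tr : Proc → Act → Proc → Prop) (τ : Act) :
    GPos Proc Act → Energy → Formula Act τ → Prop
  | delay {p : Proc} {Q Q' : Set Proc} {u : Update} {e e' : Energy} {χ : DFormula Act τ} :
      GMove Tr τ (.att p Q) u (.attD p Q') →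
      upd e u = some e' →
      (specGame Tr τ).Win (.attD p Q') e' →
      StratD Tr τ (.attD p Q') e' χ →
      StratF Tr τ (.att p Q) e (.delayed χ)
  | immediateConj {p : Proc} {Q : Set Proc} {u : Update} {e e' : Energy}
      {I : Type} {ps : I → Conjunct Act τ} :
      GMove Tr τ (.att p Q) u (.defC p Q) →
      upd e u = some e' →
      (specGame Tr τ).Win (.defC p Q) e' →
      StratD Tr τ (.defC p Q) e' (.conj I ps) →
      StratF Tr τ (.att p Q) e (.conj I ps)

/-- Attacker strategy formulas (delayed-formula sort). -/
inductive StratD (Tr : Proc → Act → Proc → Prop) (τ : Act) :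
    GPos Proc Act → Energy → DFormula Act τ → Prop
  | procrastination {p p' : Proc} {Q : Set Proc} {u : Update} {e e' : Energy}
      {χ : DFormula Act τ} :
      GMove Tr τ (.attD p Q) u (.attD p' Q) →
      upd e u = some e' →
      (specGame Tr τ).Win (.attD p' Q) e' →
      StratD Tr τ (.attD p' Q) e' χ →
      StratD Tr τ (.attD p Q) e χ
  | observation {p p' : Proc} {a : Act} {Q Q' : Set Proc} {u : Update} {e e' : Energy}
      {φ : Formula Act τ} (ha : a ≠ τ) :
      GMove Tr τ (.attD p Q) u (.att p' Q') →
      Tr p a p' → SetStep Tr Q a Q' →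
      upd e u = some e' →
      (specGame Tr τ).Win (.att p' Q') e' →
      StratF Tr τ (.att p' Q') e' φ →
      StratD Tr τ (.attD p Q) e (.obs a ha φ)
  | lateConj {p : Proc} {Q : Set Proc} {u : Update} {e e' : Energy} {χ : DFormula Act τ} :
      GMove Tr τ (.attD p Q) u (.defC p Q) →
      upd e u = some e' →
      (specGame Tr τ).Win (.defC p Q) e' →
      StratD Tr τ (.defC p Q) e' χ →
      StratD Tr τ (.attD p Q) e χ
  | stable {p : Proc} {Q Q' : Set Proc} {u : Update} {e e' : Energy} {χ : DFormula Act τ} :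
      GMove Tr τ (.attD p Q) u (.defS p Q') →
      upd e u = some e' →
      (specGame Tr τ).Win (.defS p Q') e' →
      StratD Tr τ (.defS p Q') e' χ →
      StratD Tr τ (.attD p Q) e χ
  | branch {p p' : Proc} {α : Act} {Q Q' Qa : Set Proc} {u : Update} {e e' : Energy}
      {χ : DFormula Act τ} :
      GMove Tr τ (.attD p Q) u (.defB p α p' Q' Qa) →
      upd e u = some e' →
      (specGame Tr τ).Win (.defB p α p' Q' Qa) e' →
      StratD Tr τ (.defB p α p' Q' Qa) e' χ →
      StratD Tr τ (.attD p Q) e χ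
  | conj {p : Proc} {Q : Set Proc} {e : Energy}
      (us : {q // q ∈ Q} → Update) (es : {q // q ∈ Q} → Energy)
      (ψs : {q // q ∈ Q} → Conjunct Act τ) :
      (∀ qq : {q // q ∈ Q}, GMove Tr τ (.defC p Q) (us qq) (.attC p qq.1)) →
      (∀ qq : {q // q ∈ Q}, upd e (us qq) = some (es qq)) →
      (∀ qq : {q // q ∈ Q}, (specGame Tr τ).Win (.attC p qq.1) (es qq)) →
      (∀ qq : {q // q ∈ Q}, StratC Tr τ (.attC p qq.1) (es qq) (ψs qq)) →
      StratD Tr τ (.defC p Q) e (.conj {q // q ∈ Q} ψs)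
  | stableConj {p : Proc} {Q : Set Proc} {e : Energy}
      (hne : Q.Nonempty)
      (us : {q // q ∈ Q} → Update) (es : {q // q ∈ Q} → Energy)
      (ψs : {q // q ∈ Q} → Conjunct Act τ) :
      (∀ qq : {q // q ∈ Q}, GMove Tr τ (.defS p Q) (us qq) (.attC p qq.1)) →
      (∀ qq : {q // q ∈ Q}, upd e (us qq) = some (es qq)) →
      (∀ qq : {q // q ∈ Q}, (specGame Tr τ).Win (.attC p qq.1) (es qq)) →
      (∀ qq : {q // q ∈ Q}, StratC Tr τ (.attC p qq.1) (es qq) (ψs qq)) →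
      StratD Tr τ (.defS p Q) e (.stableConj {q // q ∈ Q} ψs)
  | stableFinish {p : Proc} {u : Update} {e e' : Energy} :
      GMove Tr τ (.defS p ∅) u (.defC p ∅) →
      upd e u = some e' →
      (specGame Tr τ).Win (.defC p (∅ : Set Proc)) e' →
      StratD Tr τ (.defS p ∅) e (.stableConj Empty fun x => x.elim)
  | branchConj {p p' : Proc} {α : Act} {Q Qa Q' : Set Proc} {ua ua' : Update}
      {e e1 ea : Energy} {φa : Formula Act τ}
      (us : {q // q ∈ Q} → Update) (es : {q // q ∈ Q} → Energy)
      (ψs : {q // q ∈ Q} → Conjunct Act τ) :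
      GMove Tr τ (.defB p α p' Q Qa) ua (.attB p' Q') →
      GMove Tr τ (.attB p' Q') ua' (.att p' Q') →
      upd e ua = some e1 →
      upd e1 ua' = some ea →
      (specGame Tr τ).Win (.att p' Q') ea →
      StratF Tr τ (.att p' Q') ea φa →
      (∀ qq : {q // q ∈ Q}, GMove Tr τ (.defB p α p' Q Qa) (us qq) (.attC p qq.1)) →
      (∀ qq : {q // q ∈ Q}, upd e (us qq) = some (es qq)) →
      (∀ qq : {q // q ∈ Q}, (specGame Tr τ).Win (.attC p qq.1) (es qq)) →
      (∀ qq : {q // q ∈ Q}, StratC Tr τ (.attC p qq.1) (es qq) (ψs qq)) →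
      StratD Tr τ (.defB p α p' Q Qa) e (.branchConj α φa {q // q ∈ Q} ψs)

/-- Attacker strategy formulas (conjunct sort). -/
inductive StratC (Tr : Proc → Act → Proc → Prop) (τ : Act) :
    GPos Proc Act → Energy → Conjunct Act τ → Prop
  | pos {p q : Proc} {Q' : Set Proc} {u : Update} {e e' : Energy} {χ : DFormula Act τ} :
      GMove Tr τ (.attC p q) u (.attD p Q') →
      upd e u = some e' →
      (specGame Tr τ).Win (.attD p Q') e' →
      StratD Tr τ (.attD p Q') e' χ →
      StratC Tr τ (.attC p q) e (.pos χ)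
  | neg {p q : Proc} {P' : Set Proc} {u : Update} {e e' : Energy} {χ : DFormula Act τ} :
      GMove Tr τ (.attC p q) u (.attD q P') →
      upd e u = some e' →
      (specGame Tr τ).Win (.attD q P') e' →
      StratD Tr τ (.attD q P') e' χ →
      StratC Tr τ (.attC p q) e (.neg χ)
end

end Strat

section EnergyUpdates

def decrements (u : Update) : Energy := fun k => if u k = UpdComp.decr then 1 else 0

variable {e e' : Energy} {u : Update}

lemma decrements_add_le_of_upd (h : upd e u = some e') : decrements u + e' ≤ e := by
  unfold upd at h
  split_ifs at h with hdefined
  cases h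
  intro k
  simp only [decrements, Pi.add_apply]
  cases huk : u k with
  | decr =>
    simpa using (add_tsub_cancel_of_le (Order.one_le_iff_ne_zero.mpr (hdefined k huk))).le
  | zero => simp
  | minWith D => simp

lemma le_of_upd_of_eq_minWith (h : upd e u = some e') {k d : Fin 8} {D : Finset (Fin 8)}
    (huk : u k = UpdComp.minWith D) (hd : d ∈ D) : e' k ≤ e d := by
  unfold upd at h
  split_ifs at h
  cases h
  simpa [huk] using Finset.inf_le (f := e) (Finset.mem_insert_of_mem hd)

lemma le_of_upd_zeroU (h : upd e zeroU = some e') : e' ≤ e := by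
  have hdec : decrements zeroU = 0 := by ext k; simp [decrements, zeroU]
  simpa [hdec] using decrements_add_le_of_upd h

lemma unitE_add_le_of_upd_decU {i : Fin 8} {x : Energy} (h : upd e (decU i) = some e')
    (hx : x ≤ e') : unitE i + x ≤ e := by
  have hdec : decrements (decU i) = unitE i := by
    ext k; by_cases hk : k = i <;> simp [decrements, decU, unitE, hk]
  exact (add_le_add_right hx _).trans (hdec ▸ decrements_add_le_of_upd h)

lemma le_of_upd_minU16 (h : upd e minU16 = some e') : e' ≤ e ∧ e' 0 ≤ e 5 := by
  have hdec : decrements minU16 = 0 := by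
    ext k; fin_cases k <;> simp [decrements, minU16]
  exact ⟨by simpa [hdec] using decrements_add_le_of_upd h,
    le_of_upd_of_eq_minWith h rfl (Finset.mem_singleton_self 5)⟩

lemma le_of_upd_minU17dec8 (h : upd e minU17dec8 = some e') :
    unitE 7 + e' ≤ e ∧ e' 0 ≤ e 6 := by
  have hdec : decrements minU17dec8 = unitE 7 := by
    ext k; fin_cases k <;> simp [decrements, minU17dec8, unitE]
  exact ⟨hdec ▸ decrements_add_le_of_upd h,
    le_of_upd_of_eq_minWith h rfl (Finset.mem_singleton_self 6)⟩

lemma le_of_upd_dec23 (h : upd e dec23 = some e') : unitE 1 + unitE 2 + e' ≤ e := by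
  have hdec : decrements dec23 = unitE 1 + unitE 2 := by
    ext k; fin_cases k <;> simp [decrements, dec23, unitE]
  exact hdec ▸ decrements_add_le_of_upd h

lemma le_of_upd_minU16dec23 (h : upd e minU16dec23 = some e') :
    unitE 1 + unitE 2 + e' ≤ e ∧ e' 0 ≤ e 5 := by
  have hdec : decrements minU16dec23 = unitE 1 + unitE 2 := by
    ext k; fin_cases k <;> simp [decrements, minU16dec23, unitE]
  exact ⟨hdec ▸ decrements_add_le_of_upd h,
    le_of_upd_of_eq_minWith h rfl (Finset.mem_singleton_self 5)⟩

end EnergyUpdates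

section Prices

variable {Act : Type} {τ : Act} {e e' d x y : Energy}

lemma onlyAt_le_iff {i : Fin 8} {v : ℕ∞} : onlyAt i v ≤ x ↔ v ≤ x i := by
  refine ⟨fun h => by simpa [onlyAt] using h i, fun h k => ?_⟩
  by_cases hk : k = i
  · subst hk; simpa [onlyAt] using h
  · simp [onlyAt, hk]

lemma add_sup_le (hx : d + x ≤ e) (hy : d + y ≤ e) : d + (x ⊔ y) ≤ e := fun k => by
  simpa [← max_add_add_left] using And.intro (hx k) (hy k)

lemma add_onlyAt_le {i : Fin 8} {v : ℕ∞} (hd : d ≤ e) (hdi : d i = 0) (hv : v ≤ e i) :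
    d + onlyAt i v ≤ e := fun k => by
  by_cases hk : k = i
  · subst hk; simpa [onlyAt, hdi] using hv
  · simpa [onlyAt, hk] using hd k

lemma add_iSup_le {ι : Sort*} {f : ι → Energy} (hd : d ≤ e) (hf : ∀ i, d + f i ≤ e) :
    d + ⨆ i, f i ≤ e := fun k => by
  simp only [Pi.add_apply, iSup_apply]
  cases isEmpty_or_nonempty ι
  · simpa using hd k
  · rw [ENat.add_iSup]
    exact iSup_le fun i => hf i k

lemma exprE_conj_le {I : Type} {ps : I → Conjunct Act τ}
    (h : ∀ i, unitE 2 + exprC (ps i) ≤ e) : exprE (.conj I ps) ≤ e :=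
  iSup_le fun ⟨i⟩ => add_iSup_le (le_self_add.trans (h i)) h

lemma exprF_conj_le_unitE_add {I : Type} {ps : I → Conjunct Act τ} :
    exprF (.conj I ps) ≤ unitE 4 + exprE (.conj I ps) :=
  iSup_le fun hI => by
    rw [add_assoc]
    exact add_le_add_right (le_iSup (fun _ : Nonempty I => unitE 2 + ⨆ i, exprC (ps i)) hI) _

lemma exprE_stableConj_le {I : Type} {ps : I → Conjunct Act τ} (h3 : unitE 3 ≤ e)
    (h : ∀ i, unitE 3 + exprC (ps i) ≤ e) : exprE (.stableConj I ps) ≤ e :=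
  add_iSup_le h3 h

lemma exprC_pos_le {χ : DFormula Act τ} (hχ : exprE χ ≤ e') (he' : e' ≤ e ∧ e' 0 ≤ e 5) :
    exprC (.pos χ) ≤ e :=
  sup_le (hχ.trans he'.1) (onlyAt_le_iff.mpr ((hχ 0).trans he'.2))

lemma exprC_neg_le {χ : DFormula Act τ} (hχ : exprE χ ≤ e')
    (he' : unitE 7 + e' ≤ e ∧ e' 0 ≤ e 6) : exprC (.neg χ) ≤ e :=
  sup_le ((add_le_add_right hχ _).trans he'.1) (onlyAt_le_iff.mpr ((hχ 0).trans he'.2))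

lemma exprE_branchConj_le {α : Act} {φ : Formula Act τ} {I : Type} {ps : I → Conjunct Act τ}
    (hφ : unitE 0 + exprF φ ≤ e') (he' : unitE 1 + unitE 2 + e' ≤ e ∧ e' 0 ≤ e 5)
    (hps : ∀ i, unitE 1 + unitE 2 + exprC (ps i) ≤ e) :
    exprE (.branchConj α φ I ps) ≤ e := by
  have hd : unitE 1 + unitE 2 ≤ e := le_self_add.trans he'.1
  have hφ5 : 1 + exprF φ 0 ≤ e 5 := by
    simpa [unitE] using (hφ 0).trans he'.2
  exact add_sup_le
    (add_sup_le ((add_le_add_right hφ _).trans he'.1) (add_onlyAt_le hd (by simp [unitE]) hφ5))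
    (add_iSup_le hd hps)

end Prices

section StrategyFormulas

variable {Proc Act : Type} (Tr : Proc → Act → Proc → Prop) (τ : Act)

/-- Strategy formulas are not defined at `[p,Q]^η_a`: the branching rule looks through the
accounting move `[p,Q]^η_a ↣ [p,Q]_a`, whose `-ê₁` is charged to the price there. -/
def StratWithinBudget : GPos Proc Act → Energy → Prop
  | .att p Q, e => ∃ φ, StratF Tr τ (.att p Q) e φ ∧ exprF φ ≤ e
  | .attD p Q, e => ∃ χ, StratD Tr τ (.attD p Q) e χ ∧ exprE χ ≤ e
  | .attC p q, e => ∃ ψ, StratC Tr τ (.attC p q) e ψ ∧ exprC ψ ≤ e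
  | .attB p Q, e => ∃ e' φ, upd e (decU 0) = some e' ∧ (specGame Tr τ).Win (.att p Q) e' ∧
      StratF Tr τ (.att p Q) e' φ ∧ unitE 0 + exprF φ ≤ e
  | .defC p Q, e => ∃ ps : {q // q ∈ Q} → Conjunct Act τ,
      StratD Tr τ (.defC p Q) e (.conj _ ps) ∧ exprE (DFormula.conj _ ps) ≤ e
  | .defS p Q, e => ∃ χ, StratD Tr τ (.defS p Q) e χ ∧ exprE χ ≤ e
  | .defB p α p' Q Qa, e => ∃ χ, StratD Tr τ (.defB p α p' Q Qa) e χ ∧ exprE χ ≤ e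

variable {Tr τ}

lemma stratWithinBudget_of_attack {g g' : GPos Proc Act} {u : Update} {e e' : Energy}
    (hnd : ¬ isDefender g) (hm : GMove Tr τ g u g') (hu : upd e u = some e')
    (hw : (specGame Tr τ).Win g' e') (ih : StratWithinBudget Tr τ g' e') :
    StratWithinBudget Tr τ g e := by
  cases hm with
  | delay hQ =>
    obtain ⟨χ, hχ, hprice⟩ := ih
    exact ⟨.delayed χ, .delay (.delay hQ) hu hw hχ, hprice.trans (le_of_upd_zeroU hu)⟩
  | procrastination hp hne =>
    obtain ⟨χ, hχ, hprice⟩ := ih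
    exact ⟨χ, .procrastination (.procrastination hp hne) hu hw hχ,
      hprice.trans (le_of_upd_zeroU hu)⟩
  | observation hp ha hQ =>
    obtain ⟨φ, hφ, hprice⟩ := ih
    exact ⟨.obs _ ha φ, .observation ha (.observation hp ha hQ) hp hQ hu hw hφ,
      unitE_add_le_of_upd_decU hu hprice⟩
  | finishing =>
    obtain ⟨ps, hps, -⟩ := ih
    exact ⟨.conj _ ps, .immediateConj .finishing hu hw hps,
      iSup_le fun ⟨⟨_, hq⟩⟩ => absurd hq (Set.notMem_empty _)⟩
  | immediateConj hQ =>
    obtain ⟨ps, hps, hprice⟩ := ih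
    exact ⟨.conj _ ps, .immediateConj (.immediateConj hQ) hu hw hps,
      exprF_conj_le_unitE_add.trans (unitE_add_le_of_upd_decU hu hprice)⟩
  | lateConj =>
    obtain ⟨ps, hps, hprice⟩ := ih
    exact ⟨.conj _ ps, .lateConj .lateConj hu hw hps, hprice.trans (le_of_upd_zeroU hu)⟩
  | posConjunct hQ =>
    obtain ⟨χ, hχ, hprice⟩ := ih
    exact ⟨.pos χ, .pos (.posConjunct hQ) hu hw hχ, exprC_pos_le hprice (le_of_upd_minU16 hu)⟩
  | negConjunct hQ hpq =>
    obtain ⟨χ, hχ, hprice⟩ := ih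
    exact ⟨.neg χ, .neg (.negConjunct hQ hpq) hu hw hχ,
      exprC_neg_le hprice (le_of_upd_minU17dec8 hu)⟩
  | stableConj hp =>
    obtain ⟨χ, hχ, hprice⟩ := ih
    exact ⟨χ, .stable (.stableConj hp) hu hw hχ, hprice.trans (le_of_upd_zeroU hu)⟩
  | branchConj hp hQa =>
    obtain ⟨χ, hχ, hprice⟩ := ih
    exact ⟨χ, .branch (.branchConj hp hQa) hu hw hχ, hprice.trans (le_of_upd_zeroU hu)⟩
  | branchAccounting =>
    obtain ⟨φ, hφ, hprice⟩ := ih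
    exact ⟨e', φ, hu, hw, hφ, unitE_add_le_of_upd_decU hu hprice⟩
  | conjAnswer | conjStableAnswer | stableFinishing | branchAnswer | branchObservation =>
    exact absurd trivial hnd

variable (Tr τ) in
def MovesWithinBudget (g : GPos Proc Act) (e : Energy) : Prop :=
  ∀ u g', GMove Tr τ g u g' →
    ∃ e', upd e u = some e' ∧ (specGame Tr τ).Win g' e' ∧ StratWithinBudget Tr τ g' e'

lemma exists_conjuncts_of_movesWithinBudget {g : GPos Proc Act} {u : Update} {e : Energy}
    {p : Proc} {Q : Set Proc} (hmoves : MovesWithinBudget Tr τ g e)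
    (hanswer : ∀ qq : {q // q ∈ Q}, GMove Tr τ g u (.attC p qq.1)) :
    ∃ (es : {q // q ∈ Q} → Energy) (ψs : {q // q ∈ Q} → Conjunct Act τ),
      (∀ qq, upd e u = some (es qq)) ∧ (∀ qq, (specGame Tr τ).Win (.attC p qq.1) (es qq)) ∧
      (∀ qq, StratC Tr τ (.attC p qq.1) (es qq) (ψs qq)) ∧ ∀ qq, exprC (ψs qq) ≤ es qq := by
  choose es hes hwin hbudget using fun qq => hmoves _ _ (hanswer qq)
  choose ψs hψs hprice using hbudget
  exact ⟨es, ψs, hes, hwin, hψs, hprice⟩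

lemma stratWithinBudget_defC {p : Proc} {Q : Set Proc} {e : Energy}
    (hmoves : MovesWithinBudget Tr τ (.defC p Q) e) :
    StratWithinBudget Tr τ (.defC p Q) e := by
  have hanswer : ∀ qq : {q // q ∈ Q}, GMove Tr τ (.defC p Q) (decU 2) (.attC p qq.1) :=
    fun qq => .conjAnswer qq.2
  obtain ⟨es, ψs, hes, hwin, hψs, hprice⟩ := exists_conjuncts_of_movesWithinBudget hmoves hanswer
  exact ⟨ψs, .conj _ es ψs hanswer hes hwin hψs,
    exprE_conj_le fun qq => unitE_add_le_of_upd_decU (hes qq) (hprice qq)⟩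

lemma stratWithinBudget_defS {p : Proc} {Q : Set Proc} {e : Energy}
    (hmoves : MovesWithinBudget Tr τ (.defS p Q) e) :
    StratWithinBudget Tr τ (.defS p Q) e := by
  rcases Q.eq_empty_or_nonempty with rfl | hQ
  · obtain ⟨e', he', hwin, -⟩ := hmoves _ _ .stableFinishing
    exact ⟨_, .stableFinish .stableFinishing he' hwin,
      exprE_stableConj_le (by simpa using unitE_add_le_of_upd_decU he' zero_le) nofun⟩
  · have hanswer : ∀ qq : {q // q ∈ Q}, GMove Tr τ (.defS p Q) (decU 3) (.attC p qq.1) :=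
      fun qq => .conjStableAnswer qq.2
    obtain ⟨es, ψs, hes, hwin, hψs, hprice⟩ :=
      exists_conjuncts_of_movesWithinBudget hmoves hanswer
    have hprice' qq : unitE 3 + exprC (ψs qq) ≤ e := unitE_add_le_of_upd_decU (hes qq) (hprice qq)
    exact ⟨_, .stableConj hQ _ es ψs hanswer hes hwin hψs,
      exprE_stableConj_le (le_self_add.trans (hprice' ⟨_, hQ.some_mem⟩)) hprice'⟩

lemma stratWithinBudget_defB {p p' : Proc} {α : Act} {Q Qa : Set Proc} {e : Energy}
    (hmoves : MovesWithinBudget Tr τ (.defB p α p' Q Qa) e) :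
    StratWithinBudget Tr τ (.defB p α p' Q Qa) e := by
  have hobs : GMove Tr τ (.defB p α p' Q Qa) minU16dec23
      (.attB p' {q' | ∃ q ∈ Qa, OptStep Tr τ q α q'}) := .branchObservation rfl
  obtain ⟨e', he', -, ea, φ, hea, hwa, hφ, hφprice⟩ := hmoves _ _ hobs
  have hanswer : ∀ qq : {q // q ∈ Q}, GMove Tr τ (.defB p α p' Q Qa) dec23 (.attC p qq.1) :=
    fun qq => .branchAnswer qq.2
  obtain ⟨es, ψs, hes, hwin, hψs, hprice⟩ := exists_conjuncts_of_movesWithinBudget hmoves hanswer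
  exact ⟨_, .branchConj _ es ψs hobs .branchAccounting he' hea hwa hφ hanswer hes hwin hψs,
    exprE_branchConj_le hφprice (le_of_upd_minU16dec23 he')
      fun qq => (add_le_add_right (hprice qq) _).trans (le_of_upd_dec23 (hes qq))⟩

theorem stratWithinBudget_of_win {g : GPos Proc Act} {e : Energy}
    (h : (specGame Tr τ).Win g e) : StratWithinBudget Tr τ g e := by
  induction h with
  | attack hnd hm hu hw ih => exact stratWithinBudget_of_attack hnd hm hu hw ih
  | @defend g e hd hdefined hwin ih =>
    have hmoves : MovesWithinBudget Tr τ g e := fun u g' hm => by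
      obtain ⟨e', he'⟩ := Option.ne_none_iff_exists'.mp (hdefined u g' hm)
      exact ⟨e', he', hwin _ _ _ hm he', ih _ _ _ hm he'⟩
    cases g with
    | defC => exact stratWithinBudget_defC hmoves
    | defS => exact stratWithinBudget_defS hmoves
    | defB => exact stratWithinBudget_defB hmoves
    | att | attD | attC | attB => exact hd.elim

end StrategyFormulas

/-- winning budgets at `(p,Q)_d` yield strategy conjunctions of
price at most `e`. -/
theorem win_implies_strategy_formula_conjunction {Proc Act : Type}
    (Tr : Proc → Act → Proc → Prop) (τ : Act) (p : Proc) (Q : Set Proc) (e : Energy)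
    (h : (specGame Tr τ).Win (.defC p Q) e) :
    ∃ (I : Type) (ps : I → Conjunct Act τ),
      StratD Tr τ (.defC p Q) e (DFormula.conj I ps) ∧
        exprE (DFormula.conj I ps) ≤ e := by
  obtain ⟨ps, hps, hprice⟩ := stratWithinBudget_of_win h
  exact ⟨_, ps, hps, hprice⟩

end Spectroscopy
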